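/- For every p with 1/3 < p < 0.34 (more generally 1/d < p < 0.34 for some integer d ≥ 3), h_p((1-p)/p) ≥ (1-p)/p, where h_p(x) = 2H_p(px) + (p/(1-p))H_p(p^2 x) and H_p(z) = ∑_{l≥1} Φ_p(l)^2 z^l. -/

import Mathlib

noncomputable def Phi (p : ℝ) (l : ℕ) : ℝ :=
  ∏ k ∈ Finset.Icc 1 l, (1 - p) / (1 - p + p ^ (k + 1))

noncomputable def H (p : ℝ) (z : ℝ) : ℝ :=
  ∑' l : ℕ, Phi p (l + 1) ^ 2 * z ^ (l + 1)

noncomputable def h (p : ℝ) (x : ℝ) : ℝ :=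
  2 * H p (p * x) + (p / (1 - p)) * H p (p ^ 2 * x)

/-!
Each factor of `Phi p l` is `(1 + t_k)⁻¹` with `t_k = p ^ (k + 1) / (1 - p)`, and
`∏ (1 + t_k)⁻¹ ≥ 1 - ∑ t_k ≥ 1 - (p / (1 - p)) ^ 2 =: c`, uniformly in `l`.
Comparing with a geometric series gives `H p (1 - p) ≥ c ^ 2 (1 - p) / p`; the second
summand of `h` is nonnegative, so `h p ((1 - p) / p) ≥ 2 c ^ 2 (1 - p) / p`, and
`p < 0.34` means `p / (1 - p) < 17 / 33`, which makes `2 c ^ 2 ≥ 1`.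
-/

open Finset

theorem one_sub_sum_le_prod_inv_one_add {ι K : Type*} [Field K] [LinearOrder K]
    [IsStrictOrderedRing K] (s : Finset ι) (t : ι → K) (ht : ∀ i ∈ s, 0 ≤ t i) :
    1 - ∑ i ∈ s, t i ≤ ∏ i ∈ s, (1 + t i)⁻¹ := by
  induction s using Finset.cons_induction with
  | empty => simp
  | cons a s ha ih =>
    have hta : 0 ≤ t a := ht a (mem_cons_self a s)
    have hs : ∀ i ∈ s, 0 ≤ t i := fun i hi => ht i (mem_cons_of_mem hi)
    have hS : 0 ≤ ∑ i ∈ s, t i := sum_nonneg hs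
    rw [prod_cons, sum_cons]
    calc 1 - (t a + ∑ i ∈ s, t i) ≤ (1 + t a)⁻¹ * (1 - ∑ i ∈ s, t i) := by
          rw [le_inv_mul_iff₀ (by positivity)]
          nlinarith [mul_nonneg hta hS]
      _ ≤ (1 + t a)⁻¹ * ∏ i ∈ s, (1 + t i)⁻¹ := by gcongr; exact ih hs

theorem sum_Icc_pow_succ_le {K : Type*} [Field K] [LinearOrder K] [IsStrictOrderedRing K]
    {x : K} (hx0 : 0 ≤ x) (hx1 : x < 1) (l : ℕ) :
    ∑ k ∈ Icc 1 l, x ^ (k + 1) ≤ x ^ 2 / (1 - x) := by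
  rw [← Ico_add_one_right_eq_Icc, sum_Ico_add' (fun k => x ^ k)]
  exact geom_sum_Ico_le_of_lt_one hx0 hx1

theorem one_sub_sq_le_Phi {p : ℝ} (hp0 : 0 ≤ p) (hp1 : p < 1) (l : ℕ) :
    1 - (p / (1 - p)) ^ 2 ≤ Phi p l := by
  have h1p : 0 < 1 - p := sub_pos.2 hp1
  have hfactor (k : ℕ) :
      (1 - p) / (1 - p + p ^ (k + 1)) = (1 + p ^ (k + 1) / (1 - p))⁻¹ := by
    field_simp
  have hsum : ∑ k ∈ Icc 1 l, p ^ (k + 1) / (1 - p) ≤ (p / (1 - p)) ^ 2 := by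
    rw [← sum_div, div_pow, sq (1 - p), ← div_div]
    gcongr
    exact sum_Icc_pow_succ_le hp0 hp1 l
  calc 1 - (p / (1 - p)) ^ 2 ≤ 1 - ∑ k ∈ Icc 1 l, p ^ (k + 1) / (1 - p) := by linarith
    _ ≤ Phi p l := by
      rw [Phi, prod_congr rfl fun k _ => hfactor k]
      exact one_sub_sum_le_prod_inv_one_add _ _ fun k _ => by positivity

theorem abs_Phi_le_one {p : ℝ} (hp0 : 0 ≤ p) (hp1 : p < 1) (l : ℕ) : |Phi p l| ≤ 1 := by
  rw [Phi, abs_prod]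
  refine prod_le_one (fun _ _ => abs_nonneg _) fun k _ => ?_
  have h1p : 0 < 1 - p := sub_pos.2 hp1
  rw [abs_le, le_div_iff₀ (by positivity), div_le_one (by positivity)]
  constructor <;> nlinarith [pow_nonneg hp0 (k + 1)]

theorem hasSum_H {p z : ℝ} (hp0 : 0 ≤ p) (hp1 : p < 1) (hz0 : 0 ≤ z) (hz1 : z < 1) :
    HasSum (fun l : ℕ => Phi p (l + 1) ^ 2 * z ^ (l + 1)) (H p z) := by
  refine (Summable.of_norm_bounded (g := fun l : ℕ => z ^ l)
    (summable_geometric_of_lt_one hz0 hz1) fun l => ?_).hasSum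
  rw [norm_mul, norm_pow, Real.norm_eq_abs, Real.norm_of_nonneg (pow_nonneg hz0 _)]
  calc |Phi p (l + 1)| ^ 2 * z ^ (l + 1) ≤ 1 * z ^ (l + 1) := by
        gcongr
        exact pow_le_one₀ (abs_nonneg _) (abs_Phi_le_one hp0 hp1 _)
    _ ≤ z ^ l := by
        rw [one_mul]
        exact pow_le_pow_of_le_one hz0 hz1.le l.le_succ

theorem mul_div_one_sub_le_H {p c z : ℝ} (hp0 : 0 ≤ p) (hp1 : p < 1)
    (hc : ∀ l, c ≤ Phi p l) (hc0 : 0 ≤ c) (hz0 : 0 ≤ z) (hz1 : z < 1) :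
    c ^ 2 * (z / (1 - z)) ≤ H p z := by
  have hgeom : HasSum (fun l : ℕ => c ^ 2 * z ^ (l + 1)) (c ^ 2 * (z / (1 - z))) := by
    have hterm : (fun l : ℕ => c ^ 2 * z ^ (l + 1)) = fun l => c ^ 2 * z * z ^ l :=
      funext fun l => by ring
    rw [hterm, ← mul_div_assoc, div_eq_mul_inv]
    exact (hasSum_geometric_of_lt_one hz0 hz1).mul_left (c ^ 2 * z)
  refine hasSum_le (fun l => ?_) hgeom (hasSum_H hp0 hp1 hz0 hz1)
  gcongr
  exact hc _

theorem H_nonneg (p : ℝ) {z : ℝ} (hz0 : 0 ≤ z) : 0 ≤ H p z :=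
  tsum_nonneg fun _ => by positivity

theorem one_le_two_mul_sq_one_sub_sq {p : ℝ} (hp0 : 0 ≤ p) (hp34 : p < 0.34) :
    1 ≤ 2 * (1 - (p / (1 - p)) ^ 2) ^ 2 := by
  have ht0 : 0 ≤ p / (1 - p) := div_nonneg hp0 (by linarith)
  have ht : p / (1 - p) ≤ 17 / 33 := by
    rw [div_le_div_iff₀ (by linarith) (by norm_num)]
    linarith
  nlinarith [mul_le_mul ht ht ht0 (by norm_num)]

theorem stmt_10_general (d : ℕ) (p : ℝ) (hp : 1 / (d : ℝ) < p)
    (hp34 : p < 0.34) :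
    h p ((1 - p) / p) ≥ (1 - p) / p := by
  have hp0 : 0 < p := lt_of_le_of_lt (by positivity) hp
  have hp1 : p < 1 := by linarith
  set c := 1 - (p / (1 - p)) ^ 2
  have hc0 : 0 ≤ c :=
    sub_nonneg.2 (pow_le_one₀ (by positivity) (div_le_one_of_le₀ (by linarith) (by linarith)))
  have hH : c ^ 2 * ((1 - p) / p) ≤ H p (1 - p) := by
    simpa using mul_div_one_sub_le_H hp0.le hp1 (one_sub_sq_le_Phi hp0.le hp1) hc0
      (by linarith) (by linarith : 1 - p < 1)
  have hx : (1 - p) / p ≤ 2 * (c ^ 2 * ((1 - p) / p)) := by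
    have hc2 := one_le_two_mul_sq_one_sub_sq hp0.le hp34
    have hx0 : 0 ≤ (1 - p) / p := div_nonneg (by linarith) hp0.le
    nlinarith
  have hrest : 0 ≤ p / (1 - p) * H p (p * (1 - p)) :=
    mul_nonneg (div_nonneg hp0.le (by linarith)) (H_nonneg p (by nlinarith))
  rw [h, mul_div_cancel₀ _ hp0.ne', sq, mul_assoc, mul_div_cancel₀ _ hp0.ne']
  linarith

theorem stmt_10 (d : ℕ) (hd : 3 ≤ d) (p : ℝ) (hp : 1 / (d : ℝ) < p)
    (hp34 : p < 0.34) :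
    h p ((1 - p) / p) ≥ (1 - p) / p :=
  stmt_10_general d p hp hp34
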